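/- Let f^W be a voting by committees on X = 2^K. For agent i and S ∈ 2^K: S ∈ V_i if and only if there exists k* ∈ K such that either (i) k* ∈ S and i belongs to every coalition in W_{k*}, or (ii) k* ∉ S and {i} ∈ W_{k*}. -/

import Mathlib

/-- A preference profile: each agent `i : Fin n` has a strict preference,
modeled as a linear order on the set of alternatives `X`. -/
abbrev Profile (n : ℕ) (X : Type*) := Fin n → LinearOrder X

/-- The top (best) alternative of a preference `L`. -/
noncomputable def top {X : Type*} [Fintype X] [Nonempty X] (L : LinearOrder X) : X :=
  @Finset.max' X L Finset.univ Finset.univ_nonempty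

/-- `x` is strictly preferred to `y` according to `L`. -/
def prefers {X : Type*} (L : LinearOrder X) (x y : X) : Prop := L.lt y x

/-- The option set left open by preference `L` of agent `i` at rule `f`. -/
def OptionSet {n : ℕ} {X : Type*} (f : Profile n X → X) (i : Fin n) (L : LinearOrder X) :
    Set X :=
  {x | ∃ P : Profile n X, P i = L ∧ f P = x}

/-- `Li'` is a profitable manipulation of `f` at (true preference) `Li` for agent `i`. -/
def IsManip {n : ℕ} {X : Type*} (f : Profile n X → X) (i : Fin n)
    (Li Li' : LinearOrder X) : Prop :=
  ∃ P : Profile n X, P i = Li ∧ prefers Li (f (Function.update P i Li')) (f P)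

/-- The worst element of `O(Li')` is strictly `Li`-preferred to the worst element of `O(Li)`.
For nonempty finite option sets this is equivalent to: some element of `O(Li)` is strictly
worse (w.r.t. `Li`) than every element of `O(Li')`. -/
def WorstImproves {n : ℕ} {X : Type*} (f : Profile n X → X) (i : Fin n)
    (Li Li' : LinearOrder X) : Prop :=
  ∃ w ∈ OptionSet f i Li, ∀ w' ∈ OptionSet f i Li', prefers Li w' w

/-- The best element of `O(Li')` is strictly `Li`-preferred to the best element of `O(Li)`.
For nonempty finite option sets this is equivalent to: some element of `O(Li')` is strictly
better (w.r.t. `Li`) than every element of `O(Li)`. -/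
def BestImproves {n : ℕ} {X : Type*} (f : Profile n X → X) (i : Fin n)
    (Li Li' : LinearOrder X) : Prop :=
  ∃ b' ∈ OptionSet f i Li', ∀ b ∈ OptionSet f i Li, prefers Li b' b

/-- `Li'` is an obvious manipulation of `f` at `Li` for agent `i`. -/
def IsObviousManip {n : ℕ} {X : Type*} (f : Profile n X → X) (i : Fin n)
    (Li Li' : LinearOrder X) : Prop :=
  IsManip f i Li Li' ∧ (WorstImproves f i Li Li' ∨ BestImproves f i Li Li')

/-- `f` is not obviously manipulable. -/
def NOM {n : ℕ} {X : Type*} (f : Profile n X → X) : Prop :=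
  ∀ (i : Fin n) (Li Li' : LinearOrder X), ¬ IsObviousManip f i Li Li'

/-- `f` is tops-only. -/
def TopsOnly {n : ℕ} {X : Type*} [Fintype X] [Nonempty X] (f : Profile n X → X) : Prop :=
  ∀ P P' : Profile n X, (∀ i, top (P i) = top (P' i)) → f P = f P'

/-- The set `V_i` of alternatives that agent `i` vetoes via some preference. -/
def VetoSet {n : ℕ} {X : Type*} (f : Profile n X → X) (i : Fin n) : Set X :=
  {x | ∃ L : LinearOrder X, x ∉ OptionSet f i L}

/-- The set `SV_i` of alternatives strongly vetoed by agent `i`: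
`x` is vetoed via `L` precisely when the top of `L` differs from `x`. -/
def StrongVetoSet {n : ℕ} {X : Type*} [Fintype X] [Nonempty X]
    (f : Profile n X → X) (i : Fin n) : Set X :=
  {x | ∀ L : LinearOrder X, x ∉ OptionSet f i L ↔ top L ≠ x}

/-- `f` is dictatorial: some agent's top alternative is always selected. -/
def Dictatorial {n : ℕ} {X : Type*} [Fintype X] [Nonempty X]
    (f : Profile n X → X) : Prop :=
  ∃ i : Fin n, ∀ P : Profile n X, f P = top (P i)

open scoped Classical

/-- `Wk` is a committee: a nonempty, monotone family of nonempty coalitions of agents. -/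
def Committee {n : ℕ} (Wk : Set (Finset (Fin n))) : Prop :=
  Wk.Nonempty ∧ (∀ M ∈ Wk, M.Nonempty) ∧
    ∀ M ∈ Wk, ∀ M' : Finset (Fin n), M ⊆ M' → M' ∈ Wk

/-- Voting by committees: object `k` is chosen iff the set of agents whose top contains
`k` is a winning coalition in `W k`. Alternatives are subsets of the set `K` of objects. -/
noncomputable def vbc {n : ℕ} {K : Type*} [Fintype K] [DecidableEq K]
    (W : K → Set (Finset (Fin n))) (P : Profile n (Finset K)) : Finset K :=
  Finset.univ.filter fun k =>
    (Finset.univ.filter fun i : Fin n => k ∈ top (P i)) ∈ W k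

/-!
Agent `i` reporting `L` rules out `S` exactly when some object `k` blocks it: either `k ∈ S`,
`k ∉ top L` and `i` belongs to every winning coalition for `k`, or `k ∉ S`, `k ∈ top L` and `{i}`
alone wins `k`. If no object blocks `S`, then `S` is elected at the profile where every other
agent's top is `S`: for each `k` the coalition of supporters is large enough, or small enough, by
monotonicity of the committee. Conversely, reporting a top of `∅` or of `{k}` realises the two
kinds of blocking whenever `i` has the corresponding power over `k`.
-/

lemma top_eq_of_forall_le {X : Type*} [Fintype X] [Nonempty X] (L : LinearOrder X) {x : X}
    (h : ∀ y, L.le y x) : top L = x :=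
  letI := L
  le_antisymm (Finset.max'_le _ _ _ fun y _ => h y) (Finset.le_max' _ _ (Finset.mem_univ x))

lemma exists_top_eq {X : Type*} [Fintype X] [Nonempty X] (x : X) :
    ∃ L : LinearOrder X, top L = x := by
  classical
  let e := Fintype.equivFin X
  let g : X → Lex (Bool × Fin (Fintype.card X)) := fun y => toLex (decide (y = x), e y)
  have hg : Function.Injective g := fun a b hab =>
    e.injective (congrArg Prod.snd (toLex.injective hab))
  refine ⟨LinearOrder.lift' g hg, top_eq_of_forall_le _ fun y => ?_⟩
  show g y ≤ g x
  by_cases hy : y = x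
  · rw [hy]
  · exact Prod.Lex.toLex_le_toLex.2 (Or.inl (by simp [hy]))

namespace Committee

variable {n : ℕ} {Wk : Set (Finset (Fin n))}

lemma mem_of_subset (h : Committee Wk) {M M' : Finset (Fin n)} (hM : M ∈ Wk) (hMM' : M ⊆ M') :
    M' ∈ Wk :=
  h.2.2 M hM M' hMM'

lemma univ_mem (h : Committee Wk) : Finset.univ ∈ Wk :=
  let ⟨M, hM⟩ := h.1
  h.mem_of_subset hM (Finset.subset_univ M)

lemma empty_notMem (h : Committee Wk) : ∅ ∉ Wk := fun hmem =>
  Finset.not_nonempty_empty (h.2.1 _ hmem)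

end Committee

section VotingByCommittees

variable {n : ℕ} {K : Type*} [Fintype K] [DecidableEq K] {W : K → Set (Finset (Fin n))}

lemma mem_vbc_iff {P : Profile n (Finset K)} {k : K} :
    k ∈ vbc W P ↔ (Finset.univ.filter fun j => k ∈ top (P j)) ∈ W k := by
  simp [vbc]

lemma notMem_vbc_of_forall_mem {P : Profile n (Finset K)} {k : K} {i : Fin n}
    (hk : ∀ M ∈ W k, i ∈ M) (hi : k ∉ top (P i)) : k ∉ vbc W P := fun h =>
  hi (Finset.mem_filter.1 (hk _ (mem_vbc_iff.1 h))).2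

lemma mem_vbc_of_singleton_mem {P : Profile n (Finset K)} {k : K} {i : Fin n}
    (hW : Committee (W k)) (hk : {i} ∈ W k) (hi : k ∈ top (P i)) : k ∈ vbc W P :=
  mem_vbc_iff.2 <| hW.mem_of_subset hk <| by simpa using hi

lemma vbc_update_const (hW : ∀ k, Committee (W k)) (i : Fin n) (L LS : LinearOrder (Finset K))
    (hin : ∀ k ∈ top LS, k ∉ top L → ∃ M ∈ W k, i ∉ M)
    (hout : ∀ k ∉ top LS, k ∈ top L → {i} ∉ W k) :
    vbc W (Function.update (fun _ => LS) i L) = top LS := by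
  ext k
  have hmem : ∀ j, k ∈ top (Function.update (fun _ => LS) i L j) ↔
      if j = i then k ∈ top L else k ∈ top LS := fun j => by
    by_cases hj : j = i <;> simp [hj]
  simp only [mem_vbc_iff, hmem]
  by_cases hS : k ∈ top LS <;> by_cases hL : k ∈ top L <;>
    simp only [hS, hL, ite_self, if_false_left, if_false_right, and_true, Finset.filter_true,
      Finset.filter_false, Finset.filter_eq', Finset.mem_univ, ↓reduceIte, iff_true, iff_false]
  · exact (hW k).univ_mem
  · obtain ⟨M, hM, hiM⟩ := hin k hS hL
    exact (hW k).mem_of_subset hM fun j hj => by simpa using ne_of_mem_of_not_mem hj hiM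
  · exact hout k hS hL
  · exact (hW k).empty_notMem

end VotingByCommittees

theorem vbc_vetoSet_general {n : ℕ} {K : Type*} [Fintype K] [DecidableEq K]
    (W : K → Set (Finset (Fin n))) (hW : ∀ k, Committee (W k))
    (i : Fin n) (S : Finset K) :
    S ∈ VetoSet (vbc W) i ↔ ∃ k : K,
      (k ∈ S ∧ ∀ M ∈ W k, i ∈ M) ∨ (k ∉ S ∧ ({i} : Finset (Fin n)) ∈ W k) := by
  constructor
  · rintro ⟨L, hL⟩
    by_contra! hnone
    obtain ⟨LS, rfl⟩ := exists_top_eq S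
    refine hL ⟨Function.update (fun _ => LS) i L, by simp, vbc_update_const hW i L LS ?_ ?_⟩
    · intro k hk _
      simpa using (hnone k).1 hk
    · exact fun k hk _ => (hnone k).2 hk
  · rintro ⟨k, ⟨hkS, hall⟩ | ⟨hkS, hsing⟩⟩
    · obtain ⟨L, hL⟩ := exists_top_eq (∅ : Finset K)
      refine ⟨L, fun ⟨P, hPi, hPS⟩ => ?_⟩
      exact notMem_vbc_of_forall_mem hall (by simp [hPi, hL]) (hPS ▸ hkS)
    · obtain ⟨L, hL⟩ := exists_top_eq ({k} : Finset K)
      refine ⟨L, fun ⟨P, hPi, hPS⟩ => ?_⟩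
      exact hkS (hPS ▸ mem_vbc_of_singleton_mem (hW k) hsing (by simp [hPi, hL]))

/-- For voting by committees: `S ∈ V_i` iff there is an object `k*` with either
`k* ∈ S` and `i` in every coalition of `W k*`, or `k* ∉ S` and `{i} ∈ W k*`. -/
theorem vbc_vetoSet {n : ℕ} {K : Type*} [Fintype K] [DecidableEq K]
    (hn : 2 ≤ n) (hK : 2 ≤ Fintype.card K)
    (W : K → Set (Finset (Fin n))) (hW : ∀ k, Committee (W k))
    (i : Fin n) (S : Finset K) :
    S ∈ VetoSet (vbc W) i ↔ ∃ k : K,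
      (k ∈ S ∧ ∀ M ∈ W k, i ∈ M) ∨ (k ∉ S ∧ ({i} : Finset (Fin n)) ∈ W k) :=
  vbc_vetoSet_general W hW i S
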